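/- A tuple (z_1, …, z_n) of complex numbers satisfies f(z) = (1/n) Σ_{i=1}^n (z - z_i)^n (as polynomials) if and only if z_1^j + ⋯ + z_n^j = (-1)^j · n·a_{n-j}/binom(n,j) for all 1 ≤ j ≤ n. -/

import Mathlib

/-!
The coefficient of `X ^ (n - m)` in `∑ i, (X - z i) ^ n` is `(-1) ^ m * (n choose m) * ∑ i, z i ^ m`.
Both `f` and the average `(1/n) ∑ i, (X - z i) ^ n` have degree at most `n` and leading coefficient
`1`, so they agree iff their coefficients of `X ^ (n - m)` agree for `1 ≤ m ≤ n`, and after solving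
for the power sum the `m`-th of these equations is exactly the `m`-th power-sum equation.
-/

open Polynomial

theorem Polynomial.ext_iff_coeff_lt_of_natDegree_le {R : Type*} [Semiring R] {p q : R[X]} {n : ℕ}
    (hp : p.natDegree ≤ n) (hq : q.natDegree ≤ n) (hn : p.coeff n = q.coeff n) :
    p = q ↔ ∀ i < n, p.coeff i = q.coeff i := by
  rw [ext_iff_natDegree_le hp hq]
  exact ⟨fun h i hi => h i hi.le, fun h i hi => hi.lt_or_eq.elim (h i) (· ▸ hn)⟩

theorem Polynomial.coeff_sum_X_sub_C_pow {R ι : Type*} [CommRing R] (s : Finset ι) (z : ι → R)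
    (n k : ℕ) :
    (∑ i ∈ s, (X - C (z i)) ^ n).coeff k = (-1) ^ (n - k) * n.choose k * ∑ i ∈ s, z i ^ (n - k) := by
  rw [finsetSum_coeff, Finset.mul_sum]
  refine Finset.sum_congr rfl fun i _ => ?_
  rw [sub_eq_add_neg, ← C_neg, coeff_X_add_C_pow, neg_pow]
  ring

section AveragePowerPoly

variable {K ι : Type*} [Field K] [Fintype ι]

noncomputable def averagePowerPoly (n : ℕ) (z : ι → K) : K[X] :=
  C (n : K)⁻¹ * ∑ i, (X - C (z i)) ^ n

theorem natDegree_averagePowerPoly_le (n : ℕ) (z : ι → K) :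
    (averagePowerPoly n z).natDegree ≤ n :=
  (natDegree_C_mul_le _ _).trans <| natDegree_sum_le_of_forall_le _ _ fun i _ =>
    (natDegree_pow_le_of_le n (natDegree_X_sub_C_le (z i))).trans_eq (mul_one n)

theorem coeff_averagePowerPoly_sub {n m : ℕ} (hm : m ≤ n) (z : ι → K) :
    (averagePowerPoly n z).coeff (n - m) = (n : K)⁻¹ * ((-1) ^ m * n.choose m * ∑ i, z i ^ m) := by
  rw [averagePowerPoly, coeff_C_mul, coeff_sum_X_sub_C_pow, Nat.sub_sub_self hm, Nat.choose_symm hm]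

theorem coeff_averagePowerPoly_self (n : ℕ) (z : ι → K) :
    (averagePowerPoly n z).coeff n = (n : K)⁻¹ * Fintype.card ι := by
  simpa using coeff_averagePowerPoly_sub n.zero_le z

variable [CharZero K]

theorem sum_pow_eq_coeff_averagePowerPoly {n m : ℕ} (hn : n ≠ 0) (hm : m ≤ n) (z : ι → K) :
    ∑ i, z i ^ m = (-1) ^ m * (n * (averagePowerPoly n z).coeff (n - m) / n.choose m) := by
  have hchoose : (n.choose m : K) ≠ 0 := by exact_mod_cast (Nat.choose_pos hm).ne'
  rw [coeff_averagePowerPoly_sub hm]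
  field_simp
  rw [← pow_mul, Even.neg_one_pow ⟨m, by ring⟩, mul_one]

end AveragePowerPoly

/-- For a monic degree-n polynomial f, the representation
f = (1/n) Σ (X - z_i)^n holds iff the z_i satisfy the power-sum system
z_1^j + ⋯ + z_n^j = (-1)^j · n·a_{n-j}/binom(n,j), 1 ≤ j ≤ n. -/
theorem average_representation_iff_powerSums (n : ℕ) (hn : 1 ≤ n)
    (f : Polynomial ℂ) (hf : f.Monic) (hdeg : f.natDegree = n)
    (z : Fin n → ℂ) :
    f = Polynomial.C ((n : ℂ)⁻¹) * ∑ i, (Polynomial.X - Polynomial.C (z i)) ^ n ↔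
      ∀ j : Fin n, ∑ i, z i ^ (j.1 + 1) =
        (-1 : ℂ) ^ (j.1 + 1) * ((n : ℂ) * f.coeff (n - (j.1 + 1)) / (n.choose (j.1 + 1))) := by
  have hn0 : n ≠ 0 := by omega
  have hlead : f.coeff n = (averagePowerPoly n z).coeff n := by
    rw [coeff_averagePowerPoly_self, Fintype.card_fin, inv_mul_cancel₀ (by exact_mod_cast hn0),
      ← hdeg, hf.coeff_natDegree]
  have hcoeff (m : ℕ) (hm : m ≤ n) : f.coeff (n - m) = (averagePowerPoly n z).coeff (n - m) ↔
      ∑ i, z i ^ m = (-1) ^ m * (n * f.coeff (n - m) / n.choose m) := by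
    have hchoose : (n.choose m : ℂ) ≠ 0 := by exact_mod_cast (Nat.choose_pos hm).ne'
    rw [sum_pow_eq_coeff_averagePowerPoly hn0 hm, mul_right_inj' (pow_ne_zero _ (by norm_num)),
      div_left_inj' hchoose, mul_right_inj' (by exact_mod_cast hn0), eq_comm]
  change f = averagePowerPoly n z ↔ _
  rw [ext_iff_coeff_lt_of_natDegree_le hdeg.le (natDegree_averagePowerPoly_le n z) hlead]
  refine ⟨fun h j => (hcoeff _ j.2).1 (h _ (by omega)), fun h k hk => ?_⟩
  obtain ⟨j, rfl⟩ : ∃ j : Fin n, n - (j.1 + 1) = k := ⟨⟨n - k - 1, by omega⟩, by dsimp only; omega⟩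
  exact (hcoeff _ j.2).2 (h j)
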